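/- In the strata model, the population functional f(β) := (μ − μ_vnt/π_z − μ_vat/(1−π_z)) / (1 − π_vnt/π_z − π_vat/(1−π_z)) equals the complier mean μ_co = E[X | S = co], where μ = E[X], μ_vnt = E[Z(1−D)X], μ_vat = E[(1−Z)DX], π_vnt = E[Z(1−D)], π_vat = E[(1−Z)D]. -/

import Mathlib

open MeasureTheory ProbabilityTheory

/-- Principal strata: never-takers, always-takers, compliers. -/
inductive Strata | nt | at' | co
  deriving DecidableEq

instance : MeasurableSpace Strata := ⊤

/-!
Among units with `Z = 1`, exactly the never-takers have `D = 0`, and among units with `Z = 0`,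
exactly the always-takers have `D = 1`. Since `Z` is independent of `(S, X)`, this gives
`E[Z(1 - D)X] = π_z E[X; S = nt]` and `E[(1 - Z)DX] = (1 - π_z) E[X; S = at]`, so the numerator
of the functional is `E[X] - E[X; S = nt] - E[X; S = at] = E[X; S = co]`. With `X = 1` the same
computation turns the denominator into `P(S = co)`, and the ratio is the conditional mean.
-/

lemma indicator_setOf_eq_one_of_zero_or_one {Ω : Type*} {Z : Ω → ℝ}
    (hZbin : ∀ ω, Z ω = 0 ∨ Z ω = 1) : {ω | Z ω = 1}.indicator 1 = Z := by
  funext ω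
  rcases hZbin ω with h | h <;> simp [h]

section ZeroOne

variable {Ω : Type*} [MeasurableSpace Ω] {μ : Measure Ω} {Z : Ω → ℝ}

lemma integrable_of_zero_or_one [IsFiniteMeasure μ] (hZ : Measurable Z)
    (hZbin : ∀ ω, Z ω = 0 ∨ Z ω = 1) : Integrable Z μ := by
  rw [← indicator_setOf_eq_one_of_zero_or_one hZbin]
  exact (integrable_const 1).indicator (hZ (measurableSet_singleton 1))

lemma integral_eq_measureReal_of_zero_or_one (hZ : Measurable Z)
    (hZbin : ∀ ω, Z ω = 0 ∨ Z ω = 1) : ∫ ω, Z ω ∂μ = μ.real {ω | Z ω = 1} := by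
  conv_lhs => rw [← indicator_setOf_eq_one_of_zero_or_one hZbin]
  exact integral_indicator_one (hZ (measurableSet_singleton 1))

end ZeroOne

namespace ProbabilityTheory

lemma integral_cond_eq_setIntegral_div {Ω : Type*} [MeasurableSpace Ω] (μ : Measure Ω)
    (s : Set Ω) (X : Ω → ℝ) : ∫ ω, X ω ∂μ[|s] = (∫ ω in s, X ω ∂μ) / μ.real s := by
  rw [cond, integral_smul_measure, ENNReal.toReal_inv, smul_eq_mul, inv_mul_eq_div,
    measureReal_def]

lemma IndepFun.integral_mul_indicator_eq {Ω β : Type*} [MeasurableSpace Ω]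
    [MeasurableSpace β] [MeasurableSingletonClass β] {μ : Measure Ω} {W Y : Ω → ℝ}
    {S : Ω → β} (hind : IndepFun W (fun ω => (S ω, Y ω)) μ) (hW : AEStronglyMeasurable W μ)
    (hY : AEStronglyMeasurable Y μ) (hS : Measurable S) (b : β) :
    ∫ ω, W ω * {ω | S ω = b}.indicator Y ω ∂μ
      = (∫ ω, W ω ∂μ) * ∫ ω in {ω | S ω = b}, Y ω ∂μ := by
  have hSb : MeasurableSet {ω | S ω = b} := hS (measurableSet_singleton b)
  have hind_indicator : IndepFun W ({ω | S ω = b}.indicator Y) μ :=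
    hind.comp measurable_id
      (measurable_snd.indicator (measurable_fst (measurableSet_singleton b)))
  rw [hind_indicator.integral_fun_mul_eq_mul_integral hW (hY.indicator hSb),
    integral_indicator hSb]

end ProbabilityTheory

section Strata

variable {Ω : Type*} {S : Ω → Strata} {Z D Y : Ω → ℝ}

structure IsStrataTreatment (S : Ω → Strata) (Z D : Ω → ℝ) : Prop where
  nt : ∀ ω, S ω = .nt → D ω = 0
  at' : ∀ ω, S ω = .at' → D ω = 1
  co : ∀ ω, S ω = .co → D ω = Z ω

lemma IsStrataTreatment.mul_one_sub_mul_eq_indicator_nt (hD : IsStrataTreatment S Z D)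
    (hZbin : ∀ ω, Z ω = 0 ∨ Z ω = 1) (ω : Ω) :
    Z ω * (1 - D ω) * Y ω = Z ω * {ω | S ω = .nt}.indicator Y ω := by
  rcases hZbin ω with hz | hz <;> rcases hs : S ω <;> simp [hs, hz, hD.nt, hD.at', hD.co]

lemma IsStrataTreatment.one_sub_mul_mul_eq_indicator_at (hD : IsStrataTreatment S Z D)
    (hZbin : ∀ ω, Z ω = 0 ∨ Z ω = 1) (ω : Ω) :
    (1 - Z ω) * D ω * Y ω = (1 - Z ω) * {ω | S ω = .at'}.indicator Y ω := by
  rcases hZbin ω with hz | hz <;> rcases hs : S ω <;> simp [hs, hz, hD.nt, hD.at', hD.co]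

variable [MeasurableSpace Ω] {μ : Measure Ω}

lemma integral_eq_setIntegral_nt_add_at_add_co (hS : Measurable S) (hY : Integrable Y μ) :
    ∫ ω, Y ω ∂μ = (∫ ω in {ω | S ω = .nt}, Y ω ∂μ) + (∫ ω in {ω | S ω = .at'}, Y ω ∂μ)
      + ∫ ω in {ω | S ω = .co}, Y ω ∂μ := by
  have hset (s : Strata) : MeasurableSet {ω | S ω = s} := hS (measurableSet_singleton s)
  have hsplit : Y = {ω | S ω = .nt}.indicator Y + {ω | S ω = .at'}.indicator Y
      + {ω | S ω = .co}.indicator Y := by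
    funext ω
    rcases hs : S ω <;> simp [hs]
  conv_lhs => rw [hsplit]
  rw [integral_add' ((hY.indicator (hset _)).add (hY.indicator (hset _)))
      (hY.indicator (hset _)),
    integral_add' (hY.indicator (hset _)) (hY.indicator (hset _)),
    integral_indicator (hset _), integral_indicator (hset _), integral_indicator (hset _)]

lemma IsStrataTreatment.integral_mul_one_sub_mul (hD : IsStrataTreatment S Z D)
    (hZ : Measurable Z) (hS : Measurable S) (hZbin : ∀ ω, Z ω = 0 ∨ Z ω = 1)
    (hind : IndepFun Z (fun ω => (S ω, Y ω)) μ) (hY : AEStronglyMeasurable Y μ) :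
    ∫ ω, Z ω * (1 - D ω) * Y ω ∂μ = (∫ ω, Z ω ∂μ) * ∫ ω in {ω | S ω = .nt}, Y ω ∂μ := by
  rw [integral_congr_ae (ae_of_all _ (hD.mul_one_sub_mul_eq_indicator_nt hZbin))]
  exact hind.integral_mul_indicator_eq hZ.aestronglyMeasurable hY hS .nt

lemma IsStrataTreatment.integral_one_sub_mul_mul (hD : IsStrataTreatment S Z D)
    (hZ : Measurable Z) (hS : Measurable S) (hZbin : ∀ ω, Z ω = 0 ∨ Z ω = 1)
    (hind : IndepFun Z (fun ω => (S ω, Y ω)) μ) (hY : AEStronglyMeasurable Y μ) :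
    ∫ ω, (1 - Z ω) * D ω * Y ω ∂μ
      = (∫ ω, (1 - Z ω) ∂μ) * ∫ ω in {ω | S ω = .at'}, Y ω ∂μ := by
  rw [integral_congr_ae (ae_of_all _ (hD.one_sub_mul_mul_eq_indicator_at hZbin))]
  have hind_one_sub : IndepFun (fun ω => 1 - Z ω) (fun ω => (S ω, Y ω)) μ :=
    hind.comp (measurable_const.sub measurable_id) measurable_id
  exact hind_one_sub.integral_mul_indicator_eq (measurable_const.sub hZ).aestronglyMeasurable
    hY hS .at'

end Strata

theorem population_functional_eq_complier_mean
    {Ω : Type*} [MeasurableSpace Ω] (μ : Measure Ω) [IsProbabilityMeasure μ]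
    (Z X : Ω → ℝ) (S : Ω → Strata)
    (hZ : Measurable Z) (hS : Measurable S)
    (hZbin : ∀ ω, Z ω = 0 ∨ Z ω = 1)
    (πz : ℝ) (hπz : (μ {ω | Z ω = 1}).toReal = πz) (hπz0 : 0 < πz) (hπz1 : πz < 1)
    (hindep : IndepFun Z (fun ω => (S ω, X ω)) μ)
    (hXint : Integrable X μ)
    (D : Ω → ℝ)
    (hD : ∀ ω, D ω = match S ω with | .nt => 0 | .at' => 1 | .co => Z ω) :
    ((∫ ω, X ω ∂μ) - (∫ ω, Z ω * (1 - D ω) * X ω ∂μ) / πz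
        - (∫ ω, (1 - Z ω) * D ω * X ω ∂μ) / (1 - πz))
      / (1 - (∫ ω, Z ω * (1 - D ω) ∂μ) / πz - (∫ ω, (1 - Z ω) * D ω ∂μ) / (1 - πz))
      = ∫ ω, X ω ∂(μ[|{ω | S ω = .co}]) := by
  have hDS : IsStrataTreatment S Z D := by
    constructor <;> intro ω hs <;> rw [hD ω, hs]
  have hEZ : ∫ ω, Z ω ∂μ = πz := (integral_eq_measureReal_of_zero_or_one hZ hZbin).trans hπz
  have hE1Z : ∫ ω, (1 - Z ω) ∂μ = 1 - πz := by
    rw [integral_sub (integrable_const 1) (integrable_of_zero_or_one hZ hZbin), hEZ]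
    simp
  have hindep_one : IndepFun Z (fun ω => (S ω, (1 : ℝ))) μ :=
    hindep.comp measurable_id (measurable_fst.prodMk measurable_const)
  have hvnt : ∫ ω, Z ω * (1 - D ω) ∂μ = πz * μ.real {ω | S ω = .nt} := by
    simpa only [mul_one, setIntegral_const, smul_eq_mul, hEZ] using
      hDS.integral_mul_one_sub_mul hZ hS hZbin hindep_one aestronglyMeasurable_const
  have hvat : ∫ ω, (1 - Z ω) * D ω ∂μ = (1 - πz) * μ.real {ω | S ω = .at'} := by
    simpa only [mul_one, setIntegral_const, smul_eq_mul, hE1Z] using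
      hDS.integral_one_sub_mul_mul hZ hS hZbin hindep_one aestronglyMeasurable_const
  have hprob :
      1 = μ.real {ω | S ω = .nt} + μ.real {ω | S ω = .at'} + μ.real {ω | S ω = .co} := by
    simpa only [integral_const, measureReal_restrict_apply_univ, smul_eq_mul, mul_one,
      probReal_univ] using
      integral_eq_setIntegral_nt_add_at_add_co (μ := μ) hS (integrable_const (1 : ℝ))
  rw [hDS.integral_mul_one_sub_mul hZ hS hZbin hindep hXint.1, hEZ,
    hDS.integral_one_sub_mul_mul hZ hS hZbin hindep hXint.1, hE1Z, hvnt, hvat,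
    mul_div_cancel_left₀ _ hπz0.ne', mul_div_cancel_left₀ _ hπz0.ne',
    mul_div_cancel_left₀ _ (sub_ne_zero.2 hπz1.ne'),
    mul_div_cancel_left₀ _ (sub_ne_zero.2 hπz1.ne'),
    integral_eq_setIntegral_nt_add_at_add_co hS hXint, integral_cond_eq_setIntegral_div]
  congr 1 <;> linarith
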